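/- arXiv:2406.07993 — 3 statements merged into one kernel-verified Lean document; each statement's English description precedes it below -/
import Mathlib

section
/- In the ARLOD model, consensus is stable: if there exists a time t0 such that Q^i_o(t0) > Q^i_{-o}(t0) for some opinion o ∈ {-1,1} and every agent i ∈ {1,...,N}, then almost surely Q^i_o(t) > Q^i_{-o}(t) for every agent i and every time t ≥ t0. -/
/-!
Each update replaces a Q-value by a convex combination of it and a reward in `{-1, 1}`, so all
Q-values stay in `[-1, 1]`. In consensus on `o` every agent prefers `o`, so the listener always
prefers `o`: expressing `o` earns reward `1` and can only raise `Q_o`, while exploring with `!o`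
earns reward `-1` and can only lower `Q_{!o}`. Hence the strict preference for `o` survives
every round, for every realisation of the randomness.
-/

open MeasureTheory ProbabilityTheory

noncomputable section

/-- The preferred opinion of an agent with Q-values `q : Bool → ℝ` (`true` encodes
opinion `1`, `false` encodes opinion `-1`): the opinion with the larger Q-value
(opinion `1` in case of a tie). -/
def prefOf (q : Bool → ℝ) : Bool := if q false ≤ q true then true else false

/-- One round of the ARLOD model: agent `i` is selected and expresses an opinion to the
selected neighbour `j` (its preferred opinion if the exploration flag `e` is `false`,
the other opinion if `e` is `true`); `j` responds honestly with reward `1` if the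
expressed opinion is `j`'s preferred opinion and `-1` otherwise, and `i` updates the
Q-value of the expressed opinion by `Q ← (1−α)Q + αR`.  (If the sampled pair `(i,j)` is
not an edge of `G` — an event of probability zero — nothing happens.) -/
def arlodStep {N : ℕ} (G : SimpleGraph (Fin N)) [DecidableRel G.Adj] (α : ℝ)
    (q : Fin N → Bool → ℝ) (i j : Fin N) (e : Bool) : Fin N → Bool → ℝ :=
  if G.Adj i j then
    let expressed : Bool := if e then !(prefOf (q i)) else prefOf (q i)
    let R : ℝ := if expressed = prefOf (q j) then 1 else -1
    fun v o => if v = i ∧ o = expressed then (1 - α) * q i expressed + α * R else q v o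
  else q

theorem prefOf_eq_of_lt {q : Bool → ℝ} {o : Bool} (h : q (!o) < q o) : prefOf q = o := by
  cases o
  · simp only [Bool.not_false] at h
    simp [prefOf, h]
  · simp only [Bool.not_true] at h
    simp [prefOf, h.le]

section Step

variable {N : ℕ} (G : SimpleGraph (Fin N)) [DecidableRel G.Adj]

theorem arlodStep_apply_eq_or (α : ℝ) (q : Fin N → Bool → ℝ) (i j : Fin N) (e : Bool)
    (v : Fin N) (o : Bool) :
    arlodStep G α q i j e v o = q v o ∨
      ∃ R : ℝ, (R = 1 ∨ R = -1) ∧ arlodStep G α q i j e v o = (1 - α) * q v o + α * R := by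
  by_cases hadj : G.Adj i j
  · rw [arlodStep, if_pos hadj]
    generalize (if e then !prefOf (q i) else prefOf (q i)) = x
    have hR : (if x = prefOf (q j) then (1 : ℝ) else -1) = 1 ∨
        (if x = prefOf (q j) then (1 : ℝ) else -1) = -1 := by
      split <;> simp
    by_cases hvo : v = i ∧ o = x
    · obtain ⟨rfl, rfl⟩ := hvo
      exact Or.inr ⟨_, hR, if_pos ⟨rfl, rfl⟩⟩
    · exact Or.inl (if_neg hvo)
  · exact Or.inl (by rw [arlodStep, if_neg hadj])

theorem arlodStep_mem_Icc {α : ℝ} {q : Fin N → Bool → ℝ} (hα : α ∈ Set.Icc (0 : ℝ) 1)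
    (hq : ∀ v o, q v o ∈ Set.Icc (-1 : ℝ) 1) (i j : Fin N) (e : Bool) (v : Fin N) (o : Bool) :
    arlodStep G α q i j e v o ∈ Set.Icc (-1 : ℝ) 1 := by
  obtain h | ⟨R, hR, h⟩ := arlodStep_apply_eq_or G α q i j e v o
  · exact h ▸ hq v o
  · have hRmem : R ∈ Set.Icc (-1 : ℝ) 1 := by rcases hR with rfl | rfl <;> norm_num
    simpa [h] using convex_Icc (-1 : ℝ) 1 (hq v o) hRmem (by linarith [hα.2]) hα.1
      (sub_add_cancel 1 α)

theorem arlodStep_preserves_consensus {α : ℝ} {q : Fin N → Bool → ℝ} (hα : 0 ≤ α)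
    (hq : ∀ v o, q v o ∈ Set.Icc (-1 : ℝ) 1)
    {o : Bool} (hc : ∀ v, q v (!o) < q v o) (i j : Fin N) (e : Bool) (v : Fin N) :
    arlodStep G α q i j e v (!o) < arlodStep G α q i j e v o := by
  have hpi : prefOf (q i) = o := prefOf_eq_of_lt (hc i)
  have hpj : prefOf (q j) = o := prefOf_eq_of_lt (hc j)
  by_cases hvi : G.Adj i j ∧ v = i
  · obtain ⟨hadj, rfl⟩ := hvi
    have hup : q v o ≤ (1 - α) * q v o + α * 1 := by nlinarith [(hq v o).2]
    have hdown : (1 - α) * q v (!o) + α * -1 ≤ q v (!o) := by nlinarith [(hq v (!o)).1]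
    cases e <;> simp [arlodStep, hadj, hpi, hpj] <;> linarith [hc v]
  · rw [not_and] at hvi
    by_cases hadj : G.Adj i j
    · simpa [arlodStep, hadj, hvi hadj] using hc v
    · simpa [arlodStep, hadj] using hc v

end Step

section Trajectory

variable {N : ℕ} (G : SimpleGraph (Fin N)) [DecidableRel G.Adj] {α : ℝ}
  {q : ℕ → Fin N → Bool → ℝ} {a b : ℕ → Fin N} {e : ℕ → Bool}

theorem arlod_mem_Icc (hα : α ∈ Set.Icc (0 : ℝ) 1) (h0 : ∀ v o, q 0 v o ∈ Set.Icc (-1 : ℝ) 1)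
    (hstep : ∀ t, q (t + 1) = arlodStep G α (q t) (a t) (b t) (e t)) :
    ∀ t v o, q t v o ∈ Set.Icc (-1 : ℝ) 1 := by
  intro t
  induction t with
  | zero => exact h0
  | succ t ih => rw [hstep t]; exact arlodStep_mem_Icc G hα ih _ _ _

theorem arlod_consensus_stable (hα : α ∈ Set.Icc (0 : ℝ) 1)
    (h0 : ∀ v o, q 0 v o ∈ Set.Icc (-1 : ℝ) 1)
    (hstep : ∀ t, q (t + 1) = arlodStep G α (q t) (a t) (b t) (e t)) {t₀ : ℕ} {o : Bool}
    (hc : ∀ v, q t₀ v (!o) < q t₀ v o) : ∀ t ≥ t₀, ∀ v, q t v (!o) < q t v o := by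
  intro t ht
  induction t, ht using Nat.le_induction with
  | base => exact hc
  | succ t _ ih =>
    rw [hstep t]
    exact arlodStep_preserves_consensus G hα.1 (arlod_mem_Icc G hα h0 hstep t) ih _ _ _

end Trajectory

theorem stmt0_general {N : ℕ} (G : SimpleGraph (Fin N)) [DecidableRel G.Adj]
    (α : ℝ) (hα : α ∈ Set.Ioo (0 : ℝ) 1)
    {Ω : Type*} [MeasurableSpace Ω] (P : Measure Ω) [IsProbabilityMeasure P]
    (A J : ℕ → Ω → Fin N) (X : ℕ → Ω → Bool)
    (Q : ℕ → Ω → Fin N → Bool → ℝ) (q0 : Fin N → Bool → ℝ)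
    (hQ0 : ∀ ω, Q 0 ω = q0) (hq0mem : ∀ i o, q0 i o ∈ Set.Icc (-1 : ℝ) 1)
    (hdyn : ∀ (t : ℕ) (ω : Ω),
      Q (t + 1) ω = arlodStep G α (Q t ω) (A t ω) (J t ω) (X t ω)) :
    ∀ (t0 : ℕ) (o : Bool),
      P {ω | (∀ i, Q t0 ω i (!o) < Q t0 ω i o) →
          ∀ t ≥ t0, ∀ i, Q t ω i (!o) < Q t ω i o} = 1 := by
  intro t0 o
  have hsure : ∀ ω, (∀ i, Q t0 ω i (!o) < Q t0 ω i o) →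
      ∀ t ≥ t0, ∀ i, Q t ω i (!o) < Q t ω i o := fun ω =>
    arlod_consensus_stable (q := (Q · ω)) G (Set.Ioo_subset_Icc_self hα)
      (by rw [hQ0 ω]; exact hq0mem)
      (hdyn · ω)
  exact (congrArg P (Set.eq_univ_of_forall hsure)).trans measure_univ

/-- In the ARLOD model (N agents on a finite connected graph `G`, learning
rate `α ∈ (0,1)`, exploration rate `ε ∈ (0,1)`; at each round an agent `A t` is chosen
uniformly at random, a neighbour `J t` of it uniformly at random, and it explores with
probability `ε`, independently over rounds; Q-values start in `[-1,1]`), consensus is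
stable: if at some time `t0` there is an opinion `o` with `Q^i_o(t0) > Q^i_{-o}(t0)` for
every agent `i`, then almost surely `Q^i_o(t) > Q^i_{-o}(t)` for every agent `i` and
every `t ≥ t0`. -/
theorem stmt0 {N : ℕ} (hN : 0 < N) (G : SimpleGraph (Fin N)) [DecidableRel G.Adj]
    (hG : G.Connected) (α ε : ℝ) (hα : α ∈ Set.Ioo (0 : ℝ) 1) (hε : ε ∈ Set.Ioo (0 : ℝ) 1)
    {Ω : Type*} [MeasurableSpace Ω] (P : Measure Ω) [IsProbabilityMeasure P]
    (A J : ℕ → Ω → Fin N) (X : ℕ → Ω → Bool)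
    (hmeas : ∀ t : ℕ, Measurable (fun ω => (A t ω, J t ω, X t ω)))
    (hindep : iIndepFun (fun t ω => (A t ω, J t ω, X t ω)) P)
    (hlaw : ∀ (t : ℕ) (i j : Fin N) (e : Bool),
      P {ω | (A t ω, J t ω, X t ω) = (i, j, e)} =
        ENNReal.ofReal ((1 / (N : ℝ)) * (if G.Adj i j then 1 / (G.degree i : ℝ) else 0) *
          (if e then ε else 1 - ε)))
    (Q : ℕ → Ω → Fin N → Bool → ℝ) (q0 : Fin N → Bool → ℝ)
    (hQ0 : ∀ ω, Q 0 ω = q0) (hq0mem : ∀ i o, q0 i o ∈ Set.Icc (-1 : ℝ) 1)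
    (hdyn : ∀ (t : ℕ) (ω : Ω),
      Q (t + 1) ω = arlodStep G α (Q t ω) (A t ω) (J t ω) (X t ω)) :
    ∀ (t0 : ℕ) (o : Bool),
      P {ω | (∀ i, Q t0 ω i (!o) < Q t0 ω i o) →
          ∀ t ≥ t0, ∀ i, Q t ω i (!o) < Q t ω i o} = 1 :=
  stmt0_general G α hα P A J X Q q0 hQ0 hq0mem hdyn

end
end

section
/- In the ARLOD model with learning rate α ∈ (0,1) and exploration rate ε ∈ (0,1) on a finite connected graph G, consensus is reachable from any initial configuration of Q-values: the probability that there exists a finite time t1 and an opinion o ∈ {-1,1} with Q^i_o(t1) > Q^i_{-o}(t1) for all agents i ∈ {1,...,N} is strictly positive. -/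
/-!
Every finite sequence of moves `(i, j, e)` with `i ~ j` has positive probability, because the
moves are independent and each such move has probability `ε / (N deg i)` or
`(1 - ε) / (N deg i)`; so it suffices to exhibit one such schedule leading to consensus.
By exploring, an agent `i` talking to a neighbour `j` that prefers `o` can push `Q^i_{!o}`
towards `-1` and `Q^i_o` towards `1`, so that it strictly prefers `o`, while no other agent
changes. Starting from one edge (which exists because the moves have total mass one),
connectedness lets one convince the agents one at a time along edges leaving the convinced
set.
-/

open MeasureTheory ProbabilityTheory

noncomputable section

lemma MeasureTheory.exists_measure_preimage_singleton_ne_zero {Ω β : Type*} [MeasurableSpace Ω]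
    [Countable β] (P : Measure Ω) [NeZero P] (Y : Ω → β) : ∃ b, P (Y ⁻¹' {b}) ≠ 0 := by
  by_contra! h
  have hunion := measure_iUnion_null h
  rw [← Set.preimage_iUnion, Set.iUnion_of_singleton, Set.preimage_univ] at hunion
  exact NeZero.ne P (Measure.measure_univ_eq_zero.1 hunion)

lemma ProbabilityTheory.iIndepFun.measure_setOf_forall_eq_ne_zero {Ω β : Type*}
    [MeasurableSpace Ω] [MeasurableSpace β] [MeasurableSingletonClass β] {P : Measure Ω}
    {Y : ℕ → Ω → β} (hY : iIndepFun Y P) {T : ℕ} (f : Fin T → β)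
    (hf : ∀ k : Fin T, P (Y k ⁻¹' {f k}) ≠ 0) : P {ω | ∀ k : Fin T, Y k ω = f k} ≠ 0 := by
  have hinter := (hY.precomp Fin.val_injective).meas_iInter
    (s := fun k : Fin T => Y k ⁻¹' {f k}) fun k => ⟨{f k}, measurableSet_singleton _, rfl⟩
  have hset : {ω | ∀ k : Fin T, Y k ω = f k} = ⋂ k : Fin T, Y k ⁻¹' {f k} := by ext; simp
  rw [hset, hinter]
  exact Finset.prod_ne_zero_iff.2 fun k _ => hf k

namespace ARLOD

variable {N : ℕ} {G : SimpleGraph (Fin N)} [DecidableRel G.Adj] {α : ℝ}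

lemma prefOf_eq_of_lt {q : Bool → ℝ} {o : Bool} (h : q (!o) < q o) : prefOf q = o := by
  cases o
  · simpa [prefOf] using h
  · simpa [prefOf] using h.le

variable (G α) in
def IsStep (q q' : Fin N → Bool → ℝ) : Prop :=
  ∃ i j e, G.Adj i j ∧ arlodStep G α q i j e = q'

variable (G α) in
def run (L : List (Fin N × Fin N × Bool)) (q : Fin N → Bool → ℝ) : Fin N → Bool → ℝ :=
  L.foldl (fun q m => arlodStep G α q m.1 m.2.1 m.2.2) q

def InUnitCube (q : Fin N → Bool → ℝ) : Prop := ∀ v o, q v o ∈ Set.Icc (-1 : ℝ) 1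

def dissenters (q : Fin N → Bool → ℝ) (o : Bool) : Finset (Fin N) := {v | ¬ q v (!o) < q v o}

lemma dissenters_update_ssubset {q : Fin N → Bool → ℝ} {o : Bool} {x : Fin N} {w : Bool → ℝ}
    (hx : x ∈ dissenters q o) (hw : w (!o) < w o) :
    dissenters (Function.update q x w) o ⊂ dissenters q o := by
  refine (Finset.ssubset_iff_of_subset fun v => ?_).2 ⟨x, hx, by simpa [dissenters] using hw⟩
  rcases eq_or_ne v x with rfl | hvx
  · simp [dissenters, hw]
  · simp [dissenters, Function.update_of_ne hvx]

lemma arlodStep_of_adj {i j : Fin N} (hij : G.Adj i j) (q : Fin N → Bool → ℝ) {d e : Bool}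
    (he : (prefOf (q i) != d) = e) :
    arlodStep G α q i j e = Function.update q i (Function.update (q i) d
      ((1 - α) * q i d + α * if d = prefOf (q j) then 1 else -1)) := by
  subst he
  have hd : (if (prefOf (q i) != d) then !prefOf (q i) else prefOf (q i)) = d := by
    cases prefOf (q i) <;> cases d <;> rfl
  ext v o
  simp only [_root_.arlodStep, if_pos hij, hd, Function.update_apply]
  by_cases hv : v = i <;> by_cases ho : o = d <;> simp [hv, ho]

lemma InUnitCube.update {q : Fin N → Bool → ℝ} (hq : InUnitCube q) (i : Fin N) (d : Bool)
    {x : ℝ} (hx : x ∈ Set.Icc (-1 : ℝ) 1) :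
    InUnitCube (Function.update q i (Function.update (q i) d x)) := by
  intro v o
  simp only [Function.update_apply]
  split_ifs with hv
  · rw [Function.update_apply]
    split_ifs
    exacts [hx, hv ▸ hq v o]
  · exact hq v o

lemma InUnitCube.arlodStep (hα : α ∈ Set.Icc (0 : ℝ) 1) {q : Fin N → Bool → ℝ}
    (hq : InUnitCube q) (i j : Fin N) (e : Bool) : InUnitCube (arlodStep G α q i j e) := by
  by_cases hij : G.Adj i j
  · rw [arlodStep_of_adj hij q (d := prefOf (q i) != e)
      (by cases prefOf (q i) <;> cases e <;> rfl)]
    refine hq.update i _ (convex_Icc (-1 : ℝ) 1 (hq _ _) ?_ (by linarith [hα.2]) hα.1 (by ring))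
    split <;> norm_num
  · simpa [_root_.arlodStep, hij] using hq

lemma InUnitCube.of_reflTransGen (hα : α ∈ Set.Icc (0 : ℝ) 1) {q q' : Fin N → Bool → ℝ}
    (hq : InUnitCube q) (h : Relation.ReflTransGen (IsStep G α) q q') : InUnitCube q' := by
  induction h with
  | refl => exact hq
  | tail _ hstep ih =>
    obtain ⟨i, j, e, -, rfl⟩ := hstep
    exact ih.arlodStep hα i j e

lemma isStep_update {i j : Fin N} (hij : G.Adj i j) (q : Fin N → Bool → ℝ) (d : Bool) :
    IsStep G α q (Function.update q i (Function.update (q i) d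
      ((1 - α) * q i d + α * if d = prefOf (q j) then 1 else -1))) :=
  ⟨i, j, _, hij, arlodStep_of_adj hij q rfl⟩

/-- The reward `r` stays the same throughout because `j`'s Q-values are never touched. -/
lemma reflTransGen_update_pow {i j : Fin N} (hij : G.Adj i j) (q : Fin N → Bool → ℝ)
    (d : Bool) {r : ℝ} (hr : (if d = prefOf (q j) then 1 else -1) = r) (K : ℕ) :
    Relation.ReflTransGen (IsStep G α) q
      (Function.update q i (Function.update (q i) d (r + (1 - α) ^ K * (q i d - r)))) := by
  induction K with
  | zero => simpa using .refl
  | succ K ih =>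
    have hval : (1 - α) * (r + (1 - α) ^ K * (q i d - r)) + α * r
        = r + (1 - α) ^ (K + 1) * (q i d - r) := by ring
    have hstep := isStep_update (α := α) hij
      (Function.update q i (Function.update (q i) d (r + (1 - α) ^ K * (q i d - r)))) d
    simp only [Function.update_of_ne hij.ne', hr, Function.update_self, Function.update_idem,
      hval] at hstep
    exact ih.tail hstep

/-- Agent `i` first expresses the opinion `!o` rejected by its neighbour `j` until `Q^i_{!o}`
is near `-1`, then the opinion `o` that `j` prefers until `Q^i_o` is near `1`. -/
lemma exists_reflTransGen_update_lt (hα : α ∈ Set.Ioo (0 : ℝ) 1) {q : Fin N → Bool → ℝ}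
    (hq : InUnitCube q) {i j : Fin N} (hij : G.Adj i j) :
    ∃ w : Bool → ℝ, w (!prefOf (q j)) < w (prefOf (q j)) ∧
      Relation.ReflTransGen (IsStep G α) q (Function.update q i w) := by
  set o := prefOf (q j)
  obtain ⟨K, hK⟩ := exists_pow_lt_of_lt_one (by norm_num : (0 : ℝ) < 1 / 2)
    (by linarith [hα.1] : 1 - α < 1)
  have hc : 0 ≤ (1 - α) ^ K := pow_nonneg (by linarith [hα.2]) K
  have hreject := reflTransGen_update_pow (α := α) hij q (!o) (r := -1) (by simp [o]) K
  set q1 := Function.update q i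
    (Function.update (q i) (!o) (-1 + (1 - α) ^ K * (q i (!o) - -1)))
  have hq1j : prefOf (q1 j) = o := by simp [q1, Function.update_of_ne hij.ne', o]
  have haccept := reflTransGen_update_pow (α := α) hij q1 o (r := 1) (by simp [hq1j]) K
  refine ⟨Function.update (Function.update (q i) (!o) (-1 + (1 - α) ^ K * (q i (!o) - -1))) o
    (1 + (1 - α) ^ K * (q i o - 1)), ?_, ?_⟩
  · simp only [Function.update_self, Function.update_of_ne (Bool.not_ne_self o)]
    nlinarith [mul_nonneg hc (sub_nonneg.2 (hq i (!o)).2),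
      mul_nonneg hc (neg_le_iff_add_nonneg.1 (hq i o).1)]
  · convert hreject.trans haccept using 1
    simp [q1]

/-- A walk from a convinced agent to an unconvinced one crosses an edge `u x` with `u`
convinced and `x` not; letting `x` talk to `u` convinces `x` and shrinks the dissenters. -/
lemma exists_reflTransGen_consensus (hG : G.Connected) (hα : α ∈ Set.Ioo (0 : ℝ) 1)
    {q : Fin N → Bool → ℝ} (hq : InUnitCube q) {s : Fin N} {o : Bool}
    (hs : q s (!o) < q s o) :
    ∃ q', Relation.ReflTransGen (IsStep G α) q q' ∧ ∀ v, q' v (!o) < q' v o := by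
  induction hn : (dissenters q o).card using Nat.strong_induction_on generalizing q s with
  | _ n ih =>
  by_cases hall : ∀ v, q v (!o) < q v o
  · exact ⟨q, .refl, hall⟩
  obtain ⟨x₀, hx₀⟩ := not_forall.1 hall
  obtain ⟨⟨⟨u, x⟩, hux⟩, -, hu, hx⟩ := (hG.preconnected s x₀).some.exists_boundary_dart
    {v | q v (!o) < q v o} hs hx₀
  obtain ⟨w, hw, hreach⟩ := exists_reflTransGen_update_lt hα hq hux.symm
  rw [prefOf_eq_of_lt hu] at hw
  have hsub := dissenters_update_ssubset (by simpa [dissenters] using hx) hw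
  obtain ⟨q', hreach', hq'⟩ := ih _ (hn ▸ Finset.card_lt_card hsub)
    (hq.of_reflTransGen (Set.Ioo_subset_Icc_self hα) hreach) (s := x) (by simpa using hw) rfl
  exact ⟨q', hreach.trans hreach', hq'⟩

lemma exists_reflTransGen_forall_lt (hG : G.Connected) (hα : α ∈ Set.Ioo (0 : ℝ) 1)
    {q : Fin N → Bool → ℝ} (hq : InUnitCube q) {i j : Fin N} (hij : G.Adj i j) :
    ∃ q' o, Relation.ReflTransGen (IsStep G α) q q' ∧ ∀ v, q' v (!o) < q' v o := by
  obtain ⟨w, hw, hreach⟩ := exists_reflTransGen_update_lt hα hq hij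
  obtain ⟨q', hreach', hq'⟩ := exists_reflTransGen_consensus hG hα
    (hq.of_reflTransGen (Set.Ioo_subset_Icc_self hα) hreach) (s := i) (by simpa using hw)
  exact ⟨q', _, hreach.trans hreach', hq'⟩

lemma exists_run_eq {q q' : Fin N → Bool → ℝ} (h : Relation.ReflTransGen (IsStep G α) q q') :
    ∃ L : List (Fin N × Fin N × Bool), (∀ m ∈ L, G.Adj m.1 m.2.1) ∧ run G α L q = q' := by
  induction h using Relation.ReflTransGen.head_induction_on with
  | refl => exact ⟨[], by simp, rfl⟩
  | head hstep _ ih =>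
    obtain ⟨i, j, e, hij, rfl⟩ := hstep
    obtain ⟨L, hL, hrun⟩ := ih
    exact ⟨(i, j, e) :: L, by simpa [hij] using hL, hrun⟩

lemma eq_run_ofFn {q : ℕ → Fin N → Bool → ℝ} {m : ℕ → Fin N × Fin N × Bool}
    (h : ∀ t, q (t + 1) = arlodStep G α (q t) (m t).1 (m t).2.1 (m t).2.2) (t : ℕ) :
    q t = run G α (List.ofFn fun k : Fin t => m k) (q 0) := by
  induction t with
  | zero => rfl
  | succ t ih =>
    rw [h t, ih, run, run, List.ofFn_succ', List.concat_eq_append, List.foldl_append]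
    rfl

lemma ofReal_law_ne_zero_iff {ε : ℝ} (hε : ε ∈ Set.Ioo (0 : ℝ) 1) (i j : Fin N) (e : Bool) :
    ENNReal.ofReal ((1 / (N : ℝ)) * (if G.Adj i j then 1 / (G.degree i : ℝ) else 0) *
      (if e then ε else 1 - ε)) ≠ 0 ↔ G.Adj i j := by
  rw [ne_eq, ENNReal.ofReal_eq_zero, not_le]
  refine ⟨fun h => by_contra fun hij => by simp [hij] at h, fun hij => ?_⟩
  have hN : (0 : ℝ) < N := by exact_mod_cast i.pos
  have hdeg : (0 : ℝ) < G.degree i := by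
    exact_mod_cast G.degree_pos_iff_exists_adj i |>.2 ⟨j, hij⟩
  have hexplore : 0 < if e then ε else 1 - ε := by split <;> linarith [hε.1, hε.2]
  simp only [if_pos hij]
  positivity

end ARLOD

theorem stmt1_general {N : ℕ} (G : SimpleGraph (Fin N)) [DecidableRel G.Adj]
    (hG : G.Connected) (α ε : ℝ) (hα : α ∈ Set.Ioo (0 : ℝ) 1) (hε : ε ∈ Set.Ioo (0 : ℝ) 1)
    {Ω : Type*} [MeasurableSpace Ω] (P : Measure Ω) [IsProbabilityMeasure P]
    (A J : ℕ → Ω → Fin N) (X : ℕ → Ω → Bool)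
    (hindep : iIndepFun (fun t ω => (A t ω, J t ω, X t ω)) P)
    (hlaw : ∀ (t : ℕ) (i j : Fin N) (e : Bool),
      P {ω | (A t ω, J t ω, X t ω) = (i, j, e)} =
        ENNReal.ofReal ((1 / (N : ℝ)) * (if G.Adj i j then 1 / (G.degree i : ℝ) else 0) *
          (if e then ε else 1 - ε)))
    (Q : ℕ → Ω → Fin N → Bool → ℝ) (q0 : Fin N → Bool → ℝ)
    (hQ0 : ∀ ω, Q 0 ω = q0) (hq0mem : ∀ i o, q0 i o ∈ Set.Icc (-1 : ℝ) 1)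
    (hdyn : ∀ (t : ℕ) (ω : Ω),
      Q (t + 1) ω = arlodStep G α (Q t ω) (A t ω) (J t ω) (X t ω)) :
    0 < P {ω | ∃ t1 : ℕ, ∃ o : Bool, ∀ i, Q t1 ω i (!o) < Q t1 ω i o} := by
  have hmove : ∀ t i j e,
      P ((fun ω => (A t ω, J t ω, X t ω)) ⁻¹' {(i, j, e)}) ≠ 0 ↔ G.Adj i j :=
    fun t i j e => (hlaw t i j e).symm ▸ ARLOD.ofReal_law_ne_zero_iff hε i j e
  obtain ⟨⟨i, j, e⟩, hij⟩ := exists_measure_preimage_singleton_ne_zero P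
    (fun ω => (A 0 ω, J 0 ω, X 0 ω))
  obtain ⟨q', o, hreach, hq'⟩ :=
    ARLOD.exists_reflTransGen_forall_lt hG hα hq0mem ((hmove 0 i j e).1 hij)
  obtain ⟨L, hL, rfl⟩ := ARLOD.exists_run_eq hreach
  have hfollow := hindep.measure_setOf_forall_eq_ne_zero L.get
    fun k => (hmove k _ _ _).2 (hL _ (List.get_mem L k))
  refine pos_iff_ne_zero.2 fun hzero => hfollow (measure_mono_null (fun ω hω => ?_) hzero)
  refine ⟨L.length, o, fun v => ?_⟩
  rw [ARLOD.eq_run_ofFn (q := (Q · ω)) (m := fun t => (A t ω, J t ω, X t ω)) (hdyn · ω), hQ0,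
    funext hω, List.ofFn_get]
  exact hq' v

/-- In the ARLOD model with learning rate `α ∈ (0,1)` and exploration rate
`ε ∈ (0,1)` on a finite connected graph `G`, consensus is reachable from any initial
configuration `q0` of Q-values: with strictly positive probability there exist a finite
time `t1` and an opinion `o` with `Q^i_o(t1) > Q^i_{-o}(t1)` for all agents `i`. -/
theorem stmt1 {N : ℕ} (hN : 0 < N) (G : SimpleGraph (Fin N)) [DecidableRel G.Adj]
    (hG : G.Connected) (α ε : ℝ) (hα : α ∈ Set.Ioo (0 : ℝ) 1) (hε : ε ∈ Set.Ioo (0 : ℝ) 1)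
    {Ω : Type*} [MeasurableSpace Ω] (P : Measure Ω) [IsProbabilityMeasure P]
    (A J : ℕ → Ω → Fin N) (X : ℕ → Ω → Bool)
    (hmeas : ∀ t : ℕ, Measurable (fun ω => (A t ω, J t ω, X t ω)))
    (hindep : iIndepFun (fun t ω => (A t ω, J t ω, X t ω)) P)
    (hlaw : ∀ (t : ℕ) (i j : Fin N) (e : Bool),
      P {ω | (A t ω, J t ω, X t ω) = (i, j, e)} =
        ENNReal.ofReal ((1 / (N : ℝ)) * (if G.Adj i j then 1 / (G.degree i : ℝ) else 0) *
          (if e then ε else 1 - ε)))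
    (Q : ℕ → Ω → Fin N → Bool → ℝ) (q0 : Fin N → Bool → ℝ)
    (hQ0 : ∀ ω, Q 0 ω = q0) (hq0mem : ∀ i o, q0 i o ∈ Set.Icc (-1 : ℝ) 1)
    (hdyn : ∀ (t : ℕ) (ω : Ω),
      Q (t + 1) ω = arlodStep G α (Q t ω) (A t ω) (J t ω) (X t ω)) :
    0 < P {ω | ∃ t1 : ℕ, ∃ o : Bool, ∀ i, Q t1 ω i (!o) < Q t1 ω i o} :=
  stmt1_general G hG α ε hα hε P A J X hindep hlaw Q q0 hQ0 hq0mem hdyn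

end
end

section
/- In the ARLOD model with learning rate α ∈ (0,1) and exploration rate ε ∈ (0,1) on a finite connected graph G, the probability that the system is not in consensus at time t tends to zero as t → ∞. -/
open MeasureTheory ProbabilityTheory

noncomputable section

/-!
Consensus is absorbing, and all Q-values stay in `[-1, 1]`. From any such state there is a fixed
number `T = 2kN` of edge interactions that forces consensus: pick `k` with `(1 - α) ^ k < 1 / 2`;
an agent `u` next to an agent `w` preferring `o` is made to strictly prefer `o` (with `Q_o > 0 >
Q_{¬o}`) by `k` rewarded expressions of `o` and `k` punished expressions of `¬o`, and by
connectivity this conversion spreads over the whole graph, one agent at a time. Every edge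
interaction has probability at least some `c > 0`, so, by independence of the rounds, the
probability of not being in consensus shrinks by a factor `1 - c ^ T` every `T` rounds.
-/

open Filter Topology Finset Function
open scoped ENNReal

section Trajectory

variable {σ β : Type*} (step : σ → β → σ)

def trajectory (s : σ) (g : ℕ → β) : ℕ → σ
  | 0 => s
  | t + 1 => step (trajectory s g t) (g t)

def seqAppend (n : ℕ) (g g' : ℕ → β) : ℕ → β := fun r => if r < n then g r else g' (r - n)

inductive ReachesIn (A : β → Prop) : σ → ℕ → σ → Prop
  | refl (s : σ) : ReachesIn A s 0 s
  | tail {s s' : σ} {n : ℕ} {b : β} : ReachesIn A s n s' → A b → ReachesIn A s (n + 1) (step s' b)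

variable {step}

lemma trajectory_congr {s : σ} {g g' : ℕ → β} {n : ℕ} (h : ∀ r < n, g r = g' r) :
    trajectory step s g n = trajectory step s g' n := by
  induction n with
  | zero => rfl
  | succ n ih => rw [trajectory, trajectory, ih fun r hr => h r (by omega), h n n.lt_succ_self]

lemma trajectory_add (s : σ) (g : ℕ → β) (n m : ℕ) :
    trajectory step s g (n + m) =
      trajectory step (trajectory step s g n) (fun r => g (n + r)) m := by
  induction m with
  | zero => rfl
  | succ m ih => rw [← Nat.add_assoc, trajectory, ih]; rfl

lemma trajectory_invariant {p : σ → Prop} (hp : ∀ s b, p s → p (step s b)) {s : σ} (hs : p s)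
    (g : ℕ → β) (t : ℕ) : p (trajectory step s g t) := by
  induction t with
  | zero => exact hs
  | succ t ih => exact hp _ _ ih

lemma seqAppend_of_lt {n r : ℕ} (g g' : ℕ → β) (h : r < n) : seqAppend n g g' r = g r := if_pos h

lemma seqAppend_add (n r : ℕ) (g g' : ℕ → β) : seqAppend n g g' (n + r) = g' r := by
  simp [seqAppend]

lemma trajectory_seqAppend (s : σ) (n m : ℕ) (g g' : ℕ → β) :
    trajectory step s (seqAppend n g g') (n + m) =
      trajectory step (trajectory step s g n) g' m := by
  rw [trajectory_add, trajectory_congr fun r hr => seqAppend_of_lt g g' hr]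
  simp only [seqAppend_add]

namespace ReachesIn

variable {A : β → Prop} {s s' s'' : σ} {n m : ℕ}

lemma trans (h : ReachesIn step A s n s') (h' : ReachesIn step A s' m s'') :
    ReachesIn step A s (n + m) s'' := by
  induction h' with
  | refl => exact h
  | tail _ hb ih => exact ih.tail hb

lemma mono {A' : β → Prop} (hA : ∀ b, A b → A' b) (h : ReachesIn step A s n s') :
    ReachesIn step A' s n s' := by
  induction h with
  | refl => exact refl _
  | tail _ hb ih => exact ih.tail (hA _ hb)

lemma invariant {p : σ → Prop} (hp : ∀ s b, p s → p (step s b)) (h : ReachesIn step A s n s')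
    (hs : p s) : p s' := by
  induction h with
  | refl => exact hs
  | tail _ _ ih => exact hp _ _ ih

lemma exists_trajectory [Nonempty β] (h : ReachesIn step A s n s') :
    ∃ g : ℕ → β, (∀ r < n, A (g r)) ∧ trajectory step s g n = s' := by
  classical
  induction h with
  | refl => exact ⟨fun _ => Classical.arbitrary β, fun r hr => absurd hr r.not_lt_zero, rfl⟩
  | @tail s' n b _ hb ih =>
    obtain ⟨g, hg, rfl⟩ := ih
    refine ⟨update g n b, fun r hr => ?_, ?_⟩
    · rcases (Nat.lt_succ_iff_lt_or_eq.1 hr) with hr | rfl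
      · rw [update_of_ne hr.ne]; exact hg r hr
      · rwa [update_self]
    · rw [trajectory, update_self, trajectory_congr fun r hr => update_of_ne hr.ne _ _]

end ReachesIn

end Trajectory

lemma tendsto_zero_of_antitone_of_le_mul {u : ℕ → ℝ≥0∞} {r : ℝ≥0∞} {T : ℕ} (hu : Antitone u)
    (hr : r < 1) (h0 : u 0 ≠ ∞) (h : ∀ n, u (n + T) ≤ r * u n) : Tendsto u atTop (𝓝 0) := by
  have hpow : ∀ j, u (T * j) ≤ r ^ j * u 0 := by
    intro j
    induction j with
    | zero => simp
    | succ j ih =>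
      calc u (T * (j + 1)) = u (T * j + T) := by rw [Nat.mul_succ]
      _ ≤ r * (r ^ j * u 0) := (h _).trans (by gcongr)
      _ = r ^ (j + 1) * u 0 := by rw [pow_succ', mul_assoc]
  have hlim : Tendsto (fun j => r ^ j * u 0) atTop (𝓝 0) := by
    simpa using
      ENNReal.Tendsto.mul_const (ENNReal.tendsto_pow_atTop_nhds_zero_of_lt_one hr) (Or.inr h0)
  have hinf : ⨅ t, u t = 0 :=
    le_antisymm (ge_of_tendsto' hlim fun j => (iInf_le u (T * j)).trans (hpow j)) bot_le
  simpa [hinf] using tendsto_atTop_iInf hu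

lemma exists_measure_fiber_ne_zero {Ω β : Type*} [MeasurableSpace Ω] [Countable β]
    (P : Measure Ω) [IsProbabilityMeasure P] (f : Ω → β) : ∃ b, P {ω | f ω = b} ≠ 0 := by
  by_contra! h
  have hnull : P (⋃ b, {ω | f ω = b}) = 0 := measure_iUnion_null h
  rw [Set.iUnion_eq_univ_iff.2 fun ω => ⟨f ω, rfl⟩, measure_univ] at hnull
  exact one_ne_zero hnull

section Absorption

variable {Ω β : Type*} {M : ℕ → Ω → β}

def prefixEvent (M : ℕ → Ω → β) (n : ℕ) (g : ℕ → β) : Set Ω := {ω | ∀ r < n, M r ω = g r}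

lemma prefixEvent_eq_biInter (n : ℕ) (g : ℕ → β) :
    prefixEvent M n g = ⋂ r ∈ range n, M r ⁻¹' {g r} := by
  ext ω
  simp [prefixEvent]

variable [MeasurableSpace Ω] [MeasurableSpace β] [MeasurableSingletonClass β]
  {P : Measure Ω} {π : β → ℝ≥0∞}

lemma measurableSet_prefixEvent (hM : ∀ t, Measurable (M t)) (n : ℕ) (g : ℕ → β) :
    MeasurableSet (prefixEvent M n g) := by
  rw [prefixEvent_eq_biInter]
  exact Finset.measurableSet_biInter _ fun r _ => hM r (measurableSet_singleton _)

lemma measure_prefixEvent (hind : iIndepFun M P) (hlaw : ∀ t b, P {ω | M t ω = b} = π b)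
    (n : ℕ) (g : ℕ → β) : P (prefixEvent M n g) = ∏ r ∈ range n, π (g r) := by
  rw [prefixEvent_eq_biInter,
    hind.measure_inter_preimage_eq_mul _ fun r _ => measurableSet_singleton _]
  exact prod_congr rfl fun r _ => hlaw r (g r)

lemma measure_prefixEvent_seqAppend (hind : iIndepFun M P)
    (hlaw : ∀ t b, P {ω | M t ω = b} = π b) (n m : ℕ) (g g' : ℕ → β) :
    P (prefixEvent M (n + m) (seqAppend n g g')) =
      P (prefixEvent M n g) * ∏ r ∈ range m, π (g' r) := by
  rw [measure_prefixEvent hind hlaw, measure_prefixEvent hind hlaw, prod_range_add]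
  congr 1
  · exact prod_congr rfl fun r hr => by rw [seqAppend_of_lt _ _ (mem_range.1 hr)]
  · simp only [seqAppend_add]

lemma measure_prefixEvent_diff_le [IsFiniteMeasure P] (hM : ∀ t, Measurable (M t))
    (hind : iIndepFun M P) (hlaw : ∀ t b, P {ω | M t ω = b} = π b) {c : ℝ≥0∞} {n m : ℕ}
    (g g' : ℕ → β) (hg' : ∀ r < m, c ≤ π (g' r)) :
    P (prefixEvent M n g \ prefixEvent M (n + m) (seqAppend n g g')) ≤
      (1 - c ^ m) * P (prefixEvent M n g) := by
  have hsub : prefixEvent M (n + m) (seqAppend n g g') ⊆ prefixEvent M n g :=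
    fun ω hω r hr => by rw [hω r (by omega), seqAppend_of_lt _ _ hr]
  have hlow : c ^ m * P (prefixEvent M n g) ≤ P (prefixEvent M (n + m) (seqAppend n g g')) := by
    rw [measure_prefixEvent_seqAppend hind hlaw, mul_comm]
    gcongr
    simpa using pow_card_le_prod (range m) _ c fun r hr => hg' r (mem_range.1 hr)
  rw [measure_sdiff hsub (measurableSet_prefixEvent hM _ _).nullMeasurableSet (measure_ne_top P _),
    ENNReal.sub_mul fun _ _ => measure_ne_top P _, one_mul]
  exact tsub_le_tsub_left hlow _

variable {σ : Type*} {step : σ → β → σ} {I C : σ → Prop} {s₀ : σ}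

lemma measure_not_absorbed_add_le [Fintype β] [IsProbabilityMeasure P]
    (hM : ∀ t, Measurable (M t)) (hind : iIndepFun M P) (hlaw : ∀ t b, P {ω | M t ω = b} = π b)
    (hs₀ : I s₀) (hI : ∀ s b, I s → I (step s b)) (hC : ∀ s b, I s → C s → C (step s b))
    {c : ℝ≥0∞} {T : ℕ}
    (hdrive : ∀ s, I s → ∃ g : ℕ → β, (∀ r < T, c ≤ π (g r)) ∧ C (trajectory step s g T))
    (n : ℕ) :
    P {ω | ¬ C (trajectory step s₀ (fun r => M r ω) (n + T))} ≤
      (1 - c ^ T) * P {ω | ¬ C (trajectory step s₀ (fun r => M r ω) n)} := by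
  classical
  obtain ⟨ω₀⟩ := nonempty_of_isProbabilityMeasure P
  have : Nonempty β := ⟨M 0 ω₀⟩
  choose! drive hdrive using hdrive
  let pre : Ω → Fin n → β := fun ω r => M r ω
  -- Split according to the first `n` moves; a non-absorbed prefix `v` followed by the driving
  -- sequence from its state (an event of probability `≥ c ^ T` given `v`) ends up absorbed.
  let ext : (Fin n → β) → ℕ → β := fun v r => if h : r < n then v ⟨r, h⟩ else M r ω₀
  let st : (Fin n → β) → σ := fun v => trajectory step s₀ (ext v) n
  let S := univ.filter fun v => I (st v) ∧ ¬ C (st v)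
  let follow : (Fin n → β) → Set Ω :=
    fun v => prefixEvent M (n + T) (seqAppend n (ext v) (drive (st v)))
  have hpre : ∀ v, pre ⁻¹' {v} = prefixEvent M n (ext v) := by
    intro v
    ext ω
    simp only [pre, ext, prefixEvent, Set.mem_preimage, Set.mem_singleton_iff, funext_iff,
      Fin.forall_iff, Set.mem_ofPred_eq]
    exact forall₂_congr fun r hr => by rw [dif_pos hr, eq_comm]
  have hst : ∀ ω, trajectory step s₀ (fun r => M r ω) n = st (pre ω) :=
    fun ω => trajectory_congr fun r hr => by simp [ext, pre, hr]
  have hcover : {ω | ¬ C (trajectory step s₀ (fun r => M r ω) (n + T))} ⊆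
      ⋃ v ∈ S, pre ⁻¹' {v} \ follow v := by
    intro ω hω
    have hIn : I (st (pre ω)) := hst ω ▸ trajectory_invariant hI hs₀ _ n
    refine Set.mem_biUnion (x := pre ω) (mem_filter.2 ⟨mem_univ _, hIn, fun hCn => hω ?_⟩)
      ⟨rfl, fun hfollow => hω ?_⟩
    · rw [trajectory_add, hst]
      exact (trajectory_invariant (p := fun s => I s ∧ C s)
        (fun s b h => ⟨hI s b h.1, hC s b h.1 h.2⟩) ⟨hIn, hCn⟩ _ T).2
    · rw [trajectory_congr hfollow, trajectory_seqAppend]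
      exact (hdrive _ hIn).2
  have hbad : ⋃ v ∈ S, pre ⁻¹' {v} ⊆ {ω | ¬ C (trajectory step s₀ (fun r => M r ω) n)} :=
    Set.iUnion₂_subset fun v hv ω (hωv : pre ω = v) => by
      show ¬ C _
      rw [hst, hωv]
      exact (mem_filter.1 hv).2.2
  calc P {ω | ¬ C (trajectory step s₀ (fun r => M r ω) (n + T))}
      ≤ ∑ v ∈ S, P (pre ⁻¹' {v} \ follow v) :=
        (measure_mono hcover).trans (measure_biUnion_finset_le _ _)
    _ ≤ ∑ v ∈ S, (1 - c ^ T) * P (pre ⁻¹' {v}) := sum_le_sum fun v hv => hpre v ▸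
        measure_prefixEvent_diff_le hM hind hlaw _ _ (hdrive _ (mem_filter.1 hv).2.1).1
    _ = (1 - c ^ T) * P (⋃ v ∈ S, pre ⁻¹' {v}) := by
        rw [← mul_sum, measure_biUnion_finset (Set.pairwiseDisjoint_fiber pre _)
          fun v _ => hpre v ▸ measurableSet_prefixEvent hM _ _]
    _ ≤ _ := by gcongr

theorem tendsto_measure_not_absorbed [Fintype β] [IsProbabilityMeasure P]
    (hM : ∀ t, Measurable (M t)) (hind : iIndepFun M P) (hlaw : ∀ t b, P {ω | M t ω = b} = π b)
    (hs₀ : I s₀) (hI : ∀ s b, I s → I (step s b)) (hC : ∀ s b, I s → C s → C (step s b))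
    {T : ℕ} (hdrive : ∀ s, I s → ∃ s', C s' ∧ ReachesIn step (fun b => π b ≠ 0) s T s') :
    Tendsto (fun t => P {ω | ¬ C (trajectory step s₀ (fun r => M r ω) t)}) atTop (𝓝 0) := by
  classical
  obtain ⟨ω₀⟩ := nonempty_of_isProbabilityMeasure P
  have : Nonempty β := ⟨M 0 ω₀⟩
  set c := (univ.filter fun b => π b ≠ 0).inf π
  have hc : c ≠ 0 := fun h => by
    obtain ⟨b, hb, hb0⟩ := Finset.inf_eq_bot_iff.1 h
    exact (mem_filter.1 hb).2 hb0
  refine tendsto_zero_of_antitone_of_le_mul (T := T) ?_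
    (ENNReal.sub_lt_self ENNReal.one_ne_top one_ne_zero (pow_ne_zero T hc)) (measure_ne_top P _)
    (measure_not_absorbed_add_le hM hind hlaw hs₀ hI hC fun s hs => ?_)
  · refine antitone_nat_of_succ_le fun t => measure_mono fun ω hω hCt => hω ?_
    exact hC _ _ (trajectory_invariant hI hs₀ _ t) hCt
  · obtain ⟨s', hs', hreach⟩ := hdrive s hs
    have hcπ : ∀ b, π b ≠ 0 → c ≤ π b := fun b hb => Finset.inf_le (mem_filter.2 ⟨mem_univ b, hb⟩)
    obtain ⟨g, hg, rfl⟩ := (hreach.mono hcπ).exists_trajectory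
    exact ⟨g, hg, hs'⟩

end Absorption

namespace ARLOD

variable {N : ℕ} (G : SimpleGraph (Fin N)) [DecidableRel G.Adj]

def step (α : ℝ) (q : Fin N → Bool → ℝ) (m : Fin N × Fin N × Bool) : Fin N → Bool → ℝ :=
  arlodStep G α q m.1 m.2.1 m.2.2

def selectionProb (ε : ℝ) (m : Fin N × Fin N × Bool) : ℝ≥0∞ :=
  ENNReal.ofReal ((1 / (N : ℝ)) * (if G.Adj m.1 m.2.1 then 1 / (G.degree m.1 : ℝ) else 0) *
    (if m.2.2 then ε else 1 - ε))

def reward (q : Fin N → Bool → ℝ) (w : Fin N) (b : Bool) : ℝ := if b = prefOf (q w) then 1 else -1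

def Bounded (q : Fin N → Bool → ℝ) : Prop := ∀ i o, q i o ∈ Set.Icc (-1 : ℝ) 1

def IsConsensus (q : Fin N → Bool → ℝ) : Prop := ∃ o, ∀ i, q i (!o) < q i o

def StronglyPrefers (q : Fin N → Bool → ℝ) (v : Fin N) (o : Bool) : Prop := q v (!o) < 0 ∧ 0 < q v o

variable {G} {α ε : ℝ} {q : Fin N → Bool → ℝ} {u w : Fin N}

lemma selectionProb_ne_zero_iff (hε : ε ∈ Set.Ioo (0 : ℝ) 1) (m : Fin N × Fin N × Bool) :
    selectionProb G ε m ≠ 0 ↔ G.Adj m.1 m.2.1 := by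
  rw [selectionProb, ne_eq, ENNReal.ofReal_eq_zero, not_le]
  refine ⟨fun h => by_contra fun hm => by simp [hm] at h, fun hm => ?_⟩
  have hdeg : 0 < G.degree m.1 := (G.degree_pos_iff_exists_adj _).2 ⟨_, hm⟩
  have hN : 0 < N := m.1.pos
  rw [if_pos hm]
  refine mul_pos (by positivity) ?_
  split_ifs <;> linarith [hε.1, hε.2]

lemma prefOf_eq {o : Bool} (h : q u (!o) < q u o) : prefOf (q u) = o := by
  unfold prefOf
  cases o <;> simp only [Bool.not_true, Bool.not_false] at h
  · exact if_neg h.not_ge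
  · exact if_pos h.le

lemma step_of_adj (h : G.Adj u w) {e b : Bool} (hb : (e ^^ prefOf (q u)) = b) :
    step G α q (u, w, e) = update q u (update (q u) b ((1 - α) * q u b + α * reward q w b)) := by
  have hexp : (if e then !prefOf (q u) else prefOf (q u)) = b := by cases e <;> simpa using hb
  simp only [step, arlodStep, if_pos h, hexp, reward]
  funext v o
  by_cases hv : v = u
  · subst hv; by_cases ho : o = b <;> simp [ho]
  · simp [hv]

lemma step_of_not_adj {e : Bool} (h : ¬ G.Adj u w) : step G α q (u, w, e) = q := by
  simp only [step, arlodStep, if_neg h]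

lemma bounded_step (hα : α ∈ Set.Ioo (0 : ℝ) 1) (hq : Bounded q) (m : Fin N × Fin N × Bool) :
    Bounded (step G α q m) := by
  obtain ⟨u, w, e⟩ := m
  by_cases h : G.Adj u w
  · have hR : reward q w (e ^^ prefOf (q u)) ∈ Set.Icc (-1 : ℝ) 1 := by
      unfold reward; split_ifs <;> norm_num
    rw [step_of_adj h rfl]
    intro i o
    by_cases hi : i = u
    · subst hi
      by_cases ho : o = (e ^^ prefOf (q i))
      · subst ho
        simpa using convex_Icc (-1 : ℝ) 1 (hq _ _) hR (by linarith [hα.2]) hα.1.le (by ring)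
      · simpa [ho] using hq i o
    · simpa [hi] using hq i o
  · rwa [step_of_not_adj h]

lemma isConsensus_step (hα : α ∈ Set.Ioo (0 : ℝ) 1) (hq : Bounded q) (hc : IsConsensus q)
    (m : Fin N × Fin N × Bool) : IsConsensus (step G α q m) := by
  obtain ⟨o, ho⟩ := hc
  obtain ⟨u, w, e⟩ := m
  refine ⟨o, ?_⟩
  by_cases h : G.Adj u w
  · have hu : prefOf (q u) = o := prefOf_eq (ho u)
    have hw : prefOf (q w) = o := prefOf_eq (ho w)
    rw [step_of_adj h rfl]
    intro i
    by_cases hi : i = u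
    · subst hi
      have hup : q i (!o) < (1 - α) * q i o + α * 1 := by
        nlinarith [ho i, (hq i o).2, hα.1]
      have hdown : (1 - α) * q i (!o) + α * -1 < q i o := by
        nlinarith [ho i, (hq i (!o)).1, hα.1]
      cases e <;> cases o <;> simp_all [reward]
    · simpa [hi] using ho i
  · rw [step_of_not_adj h]; exact ho

lemma reachesIn_express_iterate (h : G.Adj u w) (q : Fin N → Bool → ℝ) (b : Bool) (k : ℕ) :
    ReachesIn (step G α) (fun m => G.Adj m.1 m.2.1) q k
      (update q u (update (q u) b ((1 - α) ^ k * q u b + (1 - (1 - α) ^ k) * reward q w b))) := by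
  induction k with
  | zero => simpa using ReachesIn.refl q
  | succ k ih =>
    set q' := update q u (update (q u) b ((1 - α) ^ k * q u b + (1 - (1 - α) ^ k) * reward q w b))
    have hw : q' w = q w := update_of_ne (G.ne_of_adj h).symm _ _
    convert ih.tail (b := (u, w, b ^^ prefOf (q' u))) h using 1
    have hr : reward q' w b = reward q w b := by rw [reward, reward, hw]
    rw [step_of_adj h (b := b) (by simp), hr]
    simp only [q', update_idem, update_self]
    congr 2
    ring

/-- `k` interactions in which `u` expresses `o := prefOf (q w)` to `w` are rewarded and lift
`q u o` above `0`; `k` more in which it expresses `!o` are punished and push `q u (!o)` below `0`.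
The bound `(1 - α) ^ k < 1 / 2` makes the initial values (in `[-1, 1]`) irrelevant. -/
lemma exists_reachesIn_stronglyPrefers (hα : α ∈ Set.Ioo (0 : ℝ) 1) (h : G.Adj u w)
    (hq : Bounded q) {k : ℕ} (hk : (1 - α) ^ k < 1 / 2) :
    ∃ q', ReachesIn (step G α) (fun m => G.Adj m.1 m.2.1) q (2 * k) q' ∧
      StronglyPrefers q' u (prefOf (q w)) ∧ ∀ v, v ≠ u → q' v = q v := by
  set o := prefOf (q w)
  have hpos : 0 ≤ (1 - α) ^ k := pow_nonneg (by linarith [hα.2]) k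
  have hup := reachesIn_express_iterate (α := α) h q o k
  set q₁ := update q u (update (q u) o ((1 - α) ^ k * q u o + (1 - (1 - α) ^ k) * reward q w o))
  have hw : q₁ w = q w := update_of_ne (G.ne_of_adj h).symm _ _
  refine ⟨_, two_mul k ▸ hup.trans (reachesIn_express_iterate h q₁ (!o) k), ⟨?_, ?_⟩,
    fun v hv => ?_⟩
  · have : reward q₁ w (!o) = -1 := by simp [reward, hw, o]
    simp only [this, q₁, update_self, update_of_ne (Bool.not_ne_self o)]
    nlinarith [(hq u (!o)).2]
  · have : reward q w o = 1 := by simp [reward, o]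
    simp only [q₁, update_self, update_of_ne (Bool.self_ne_not o), this]
    nlinarith [(hq u o).1]
  · simp [q₁, update_of_ne hv]

lemma StronglyPrefers.prefOf_eq {v : Fin N} {o : Bool} (h : StronglyPrefers q v o) :
    prefOf (q v) = o :=
  ARLOD.prefOf_eq (h.1.trans h.2)

lemma exists_reachesIn_forall_stronglyPrefers (hα : α ∈ Set.Ioo (0 : ℝ) 1) (hG : G.Connected)
    {k : ℕ} (hk : (1 - α) ^ k < 1 / 2) (o : Bool) (D : Finset (Fin N)) :
    ∀ q, Bounded q → (∃ a, a ∉ D) → (∀ v ∉ D, StronglyPrefers q v o) →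
      ∃ q', ReachesIn (step G α) (fun m => G.Adj m.1 m.2.1) q (2 * k * #D) q' ∧
        ∀ v, StronglyPrefers q' v o := by
  induction D using Finset.strongInduction with
  | H D ih =>
  intro q hq ⟨a, ha⟩ hD
  rcases D.eq_empty_or_nonempty with rfl | ⟨b, hb⟩
  · exact ⟨q, ReachesIn.refl q, fun v => hD v (notMem_empty v)⟩
  obtain ⟨p⟩ := hG.preconnected a b
  obtain ⟨⟨⟨w, u⟩, hwu⟩, -, hw, hu⟩ := p.exists_boundary_dart (↑D)ᶜ ha (by simpa using hb)
  simp only [Set.mem_compl_iff, mem_coe, not_not] at hw hu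
  obtain ⟨q₁, hreach₁, hu₁, hq₁⟩ := exists_reachesIn_stronglyPrefers hα hwu.symm hq hk
  rw [(hD _ hw).prefOf_eq] at hu₁
  obtain ⟨q₂, hreach₂, hall⟩ := ih (D.erase u) (erase_ssubset hu) q₁
    (hreach₁.invariant (fun _ m hq => bounded_step hα hq m) hq) ⟨u, notMem_erase u D⟩
    fun v hv => by
      by_cases hvu : v = u
      · exact hvu ▸ hu₁
      · unfold StronglyPrefers
        rw [hq₁ v hvu]
        exact hD v fun hvD => hv (mem_erase.2 ⟨hvu, hvD⟩)
  refine ⟨q₂, ?_, hall⟩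
  rw [← card_erase_add_one hu, mul_add_one, add_comm]
  exact hreach₁.trans hreach₂

lemma exists_reachesIn_isConsensus (hα : α ∈ Set.Ioo (0 : ℝ) 1) (hG : G.Connected)
    (h : G.Adj u w) {k : ℕ} (hk : (1 - α) ^ k < 1 / 2) (hq : Bounded q) :
    ∃ q', IsConsensus q' ∧ ReachesIn (step G α) (fun m => G.Adj m.1 m.2.1) q (2 * k * N) q' := by
  obtain ⟨q₁, hreach₁, hu₁, -⟩ := exists_reachesIn_stronglyPrefers hα h hq hk
  obtain ⟨q₂, hreach₂, hall⟩ :=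
    exists_reachesIn_forall_stronglyPrefers hα hG hk (prefOf (q w)) {u}ᶜ q₁
      (hreach₁.invariant (fun _ m hq => bounded_step hα hq m) hq) ⟨u, by simp⟩
      fun v hv => by rw [notMem_compl, mem_singleton] at hv; exact hv ▸ hu₁
  refine ⟨q₂, ⟨_, fun i => (hall i).1.trans (hall i).2⟩, ?_⟩
  have hN : 2 * k * N = 2 * k + 2 * k * #({u}ᶜ) := by
    rw [card_compl, card_singleton, Fintype.card_fin, ← mul_one_add]
    have := u.pos
    congr 1
    omega
  exact hN ▸ hreach₁.trans hreach₂

end ARLOD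
theorem stmt4_general {N : ℕ} (G : SimpleGraph (Fin N)) [DecidableRel G.Adj]
    (hG : G.Connected) (α ε : ℝ) (hα : α ∈ Set.Ioo (0 : ℝ) 1) (hε : ε ∈ Set.Ioo (0 : ℝ) 1)
    {Ω : Type*} [MeasurableSpace Ω] (P : Measure Ω) [IsProbabilityMeasure P]
    (A J : ℕ → Ω → Fin N) (X : ℕ → Ω → Bool)
    (hmeas : ∀ t : ℕ, Measurable (fun ω => (A t ω, J t ω, X t ω)))
    (hindep : iIndepFun (fun t ω => (A t ω, J t ω, X t ω)) P)
    (hlaw : ∀ (t : ℕ) (i j : Fin N) (e : Bool),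
      P {ω | (A t ω, J t ω, X t ω) = (i, j, e)} =
        ENNReal.ofReal ((1 / (N : ℝ)) * (if G.Adj i j then 1 / (G.degree i : ℝ) else 0) *
          (if e then ε else 1 - ε)))
    (Q : ℕ → Ω → Fin N → Bool → ℝ) (q0 : Fin N → Bool → ℝ)
    (hQ0 : ∀ ω, Q 0 ω = q0) (hq0mem : ∀ i o, q0 i o ∈ Set.Icc (-1 : ℝ) 1)
    (hdyn : ∀ (t : ℕ) (ω : Ω),
      Q (t + 1) ω = arlodStep G α (Q t ω) (A t ω) (J t ω) (X t ω)) :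
    Filter.Tendsto (fun t : ℕ => P {ω | ¬ ∃ o : Bool, ∀ i, Q t ω i (!o) < Q t ω i o})
      Filter.atTop (nhds 0) := by
  set M : ℕ → Ω → Fin N × Fin N × Bool := fun t ω => (A t ω, J t ω, X t ω)
  have hlawM : ∀ t m, P {ω | M t ω = m} = ARLOD.selectionProb G ε m :=
    fun t m => hlaw t m.1 m.2.1 m.2.2
  have hQ : ∀ t ω, Q t ω = trajectory (ARLOD.step G α) q0 (fun r => M r ω) t := by
    intro t ω
    induction t with
    | zero => exact hQ0 ω
    | succ t ih => rw [hdyn, ih]; rfl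
  -- The law has total mass one and charges only edges, so `G` has an edge.
  obtain ⟨⟨u, w, e⟩, hue⟩ := exists_measure_fiber_ne_zero P (M 0)
  have huw : G.Adj u w := (ARLOD.selectionProb_ne_zero_iff hε _).1 (hlawM 0 _ ▸ hue)
  obtain ⟨k, hk⟩ := exists_pow_lt_of_lt_one (by norm_num : (0 : ℝ) < 1 / 2)
    (by linarith [hα.1] : 1 - α < 1)
  simp only [hQ]
  refine tendsto_measure_not_absorbed (C := ARLOD.IsConsensus) (T := 2 * k * N)
    hmeas hindep hlawM hq0mem (fun _ m hq => ARLOD.bounded_step hα hq m)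
    (fun _ m hq hc => ARLOD.isConsensus_step hα hq hc m) fun q hq => ?_
  obtain ⟨q', hq', hreach⟩ := ARLOD.exists_reachesIn_isConsensus hα hG huw hk hq
  exact ⟨q', hq', hreach.mono fun m hm => (ARLOD.selectionProb_ne_zero_iff hε m).2 hm⟩

/-- In the ARLOD model with learning rate `α ∈ (0,1)` and exploration rate
`ε ∈ (0,1)` on a finite connected graph `G`, the probability that the system is not in
consensus at time `t` tends to zero as `t → ∞`. -/
theorem stmt4 {N : ℕ} (hN : 0 < N) (G : SimpleGraph (Fin N)) [DecidableRel G.Adj]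
    (hG : G.Connected) (α ε : ℝ) (hα : α ∈ Set.Ioo (0 : ℝ) 1) (hε : ε ∈ Set.Ioo (0 : ℝ) 1)
    {Ω : Type*} [MeasurableSpace Ω] (P : Measure Ω) [IsProbabilityMeasure P]
    (A J : ℕ → Ω → Fin N) (X : ℕ → Ω → Bool)
    (hmeas : ∀ t : ℕ, Measurable (fun ω => (A t ω, J t ω, X t ω)))
    (hindep : iIndepFun (fun t ω => (A t ω, J t ω, X t ω)) P)
    (hlaw : ∀ (t : ℕ) (i j : Fin N) (e : Bool),
      P {ω | (A t ω, J t ω, X t ω) = (i, j, e)} =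
        ENNReal.ofReal ((1 / (N : ℝ)) * (if G.Adj i j then 1 / (G.degree i : ℝ) else 0) *
          (if e then ε else 1 - ε)))
    (Q : ℕ → Ω → Fin N → Bool → ℝ) (q0 : Fin N → Bool → ℝ)
    (hQ0 : ∀ ω, Q 0 ω = q0) (hq0mem : ∀ i o, q0 i o ∈ Set.Icc (-1 : ℝ) 1)
    (hdyn : ∀ (t : ℕ) (ω : Ω),
      Q (t + 1) ω = arlodStep G α (Q t ω) (A t ω) (J t ω) (X t ω)) :
    Filter.Tendsto (fun t : ℕ => P {ω | ¬ ∃ o : Bool, ∀ i, Q t ω i (!o) < Q t ω i o})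
      Filter.atTop (nhds 0) :=
  stmt4_general G hG α ε hα hε P A J X hmeas hindep hlaw Q q0 hQ0 hq0mem hdyn

end
end
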